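/- In ℰ_n(u), for all i, j with |i−j| = 1, one has T_iT_jE_jT_i = T_jT_iE_iT_j. -/

import Mathlib

/-! Multiply both sides on the right by `T_j`. By `E_j T_i T_j = T_i T_j E_i` and the braid relation the
left side becomes `T_j T_i T_j² E_i`, and the right side is `T_j T_i E_i T_j²`. These agree because
`T_j² = 1 + (u⁻¹ - 1) E_j (1 - T_j)` commutes with `E_i`, via `E_i E_j T_j = T_j E_i E_j`. Finally `T_j` is
a unit: `P = E_j (1 - T_j)` satisfies `T_j P = -u⁻¹ P`, so `T_j + (1 - u) P` inverts `T_j`. -/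

noncomputable section

open FreeAlgebra

/-- The base field `K = ℂ(u)`, the field of rational functions over `ℂ`. -/
abbrev K : Type := RatFunc ℂ

/-- The distinguished element `u` of `K = ℂ(u)`. -/
def u : K := RatFunc.X

/-- Generators of the algebra `ℰ_n(u)`: `T i` and `E i` for `i` ranging over `n - 1` indices. -/
inductive Gen (n : ℕ) : Type
  | T : Fin (n - 1) → Gen n
  | E : Fin (n - 1) → Gen n

/-- The free `K`-algebra on the generators. -/
abbrev FA (n : ℕ) : Type := FreeAlgebra K (Gen n)

def fT {n : ℕ} (i : Fin (n - 1)) : FA n := ι K (Gen.T i)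
def fE {n : ℕ} (i : Fin (n - 1)) : FA n := ι K (Gen.E i)

/-- The defining relations of `ℰ_n(u)`. -/
inductive EnRel (n : ℕ) : FA n → FA n → Prop
  | TTfar {i j : Fin (n - 1)} : 1 < Nat.dist i j →
      EnRel n (fT i * fT j) (fT j * fT i)
  | braid {i j : Fin (n - 1)} : Nat.dist i j = 1 →
      EnRel n (fT i * fT j * fT i) (fT j * fT i * fT j)
  | Eidem (i : Fin (n - 1)) : EnRel n (fE i * fE i) (fE i)
  | EE (i j : Fin (n - 1)) : EnRel n (fE i * fE j) (fE j * fE i)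
  | ET (i : Fin (n - 1)) : EnRel n (fE i * fT i) (fT i * fE i)
  | ETfar {i j : Fin (n - 1)} : 1 < Nat.dist i j →
      EnRel n (fE i * fT j) (fT j * fE i)
  | ETT {i j : Fin (n - 1)} : Nat.dist i j = 1 →
      EnRel n (fE j * (fT i * fT j)) (fT i * fT j * fE i)
  | EET {i j : Fin (n - 1)} : Nat.dist i j = 1 →
      EnRel n (fE i * fE j * fT j) (fE i * fT j * fE i)
  | ETE {i j : Fin (n - 1)} : Nat.dist i j = 1 →
      EnRel n (fE i * fT j * fE i) (fT j * (fE i * fE j))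
  | Tsq (i : Fin (n - 1)) :
      EnRel n (fT i * fT i) (1 + (u⁻¹ - 1) • (fE i * (1 - fT i)))

/-- The algebra `ℰ_n(u)`, as a quotient of the free algebra by the defining relations. -/
abbrev En (n : ℕ) : Type := RingQuot (EnRel n)

/-- The generator `T i` of `ℰ_n(u)`. -/
def T {n : ℕ} (i : Fin (n - 1)) : En n := RingQuot.mkAlgHom K (EnRel n) (fT i)

/-- The generator `E i` of `ℰ_n(u)`. -/
def E {n : ℕ} (i : Fin (n - 1)) : En n := RingQuot.mkAlgHom K (EnRel n) (fE i)


/-! Multiply both sides on the right by `T_j`. By `E_j T_i T_j = T_i T_j E_i` and the braid relation the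
left side becomes `T_j T_i T_j² E_i`, and the right side is `T_j T_i E_i T_j²`. These agree because
`T_j² = 1 + (u⁻¹ - 1) E_j (1 - T_j)` commutes with `E_i`, via `E_i E_j T_j = T_j E_i E_j`. Finally `T_j` is
a unit: `P = E_j (1 - T_j)` satisfies `T_j P = -u⁻¹ P`, so `T_j + (1 - u) P` inverts `T_j`. -/
namespace En

variable {n : ℕ}

section Relations

variable (k : Fin (n - 1))

theorem commute_E_T : Commute (E k) (T k) := by
  rw [Commute, SemiconjBy]
  simpa only [E, T, map_mul] using RingQuot.mkAlgHom_rel K (EnRel.ET k)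

theorem E_mul_self : E k * E k = E k := by
  simpa only [E, map_mul] using RingQuot.mkAlgHom_rel K (EnRel.Eidem k)

theorem commute_E_E (l : Fin (n - 1)) : Commute (E k) (E l) := by
  rw [Commute, SemiconjBy]
  simpa only [E, map_mul] using RingQuot.mkAlgHom_rel K (EnRel.EE k l)

theorem T_mul_self : T k * T k = 1 + (u⁻¹ - 1) • (E k * (1 - T k)) := by
  simpa only [E, T, map_mul, map_add, map_one, map_smul, map_sub] using
    RingQuot.mkAlgHom_rel K (EnRel.Tsq k)

variable {i j : Fin (n - 1)} (hij : Nat.dist i j = 1)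
include hij

theorem T_braid : T i * T j * T i = T j * T i * T j := by
  simpa only [T, map_mul] using RingQuot.mkAlgHom_rel K (EnRel.braid hij)

theorem E_mul_T_mul_T : E j * T i * T j = T i * T j * E i := by
  simpa only [E, T, map_mul, mul_assoc] using RingQuot.mkAlgHom_rel K (EnRel.ETT hij)

theorem E_mul_E_mul_T : E i * E j * T j = T j * (E i * E j) := by
  have hEET := RingQuot.mkAlgHom_rel K (EnRel.EET hij)
  have hETE := RingQuot.mkAlgHom_rel K (EnRel.ETE hij)
  simp only [map_mul] at hEET hETE
  exact hEET.trans hETE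

end Relations

theorem T_mul_E_mul_one_sub_T (k : Fin (n - 1)) :
    T k * (E k * (1 - T k)) = -u⁻¹ • (E k * (1 - T k)) := by
  calc T k * (E k * (1 - T k))
      = E k * T k - E k * (T k * T k) := by
        rw [← mul_assoc, ← (commute_E_T k).eq, mul_assoc, mul_sub, mul_one, mul_sub]
    _ = E k * T k - E k - (u⁻¹ - 1) • (E k * (1 - T k)) := by
        rw [T_mul_self, mul_add, mul_one, mul_smul_comm, ← mul_assoc, E_mul_self, sub_add_eq_sub_sub]
    _ = -u⁻¹ • (E k * (1 - T k)) := by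
        -- the `K`-action on `En n` is `RingQuot`'s, which `sub_smul` only matches with explicit arguments
        rw [sub_smul u⁻¹ 1 (E k * (1 - T k)), one_smul, neg_smul u⁻¹ (E k * (1 - T k)), mul_sub,
          mul_one]
        abel

def Tinv (k : Fin (n - 1)) : En n := T k + (1 - u) • (E k * (1 - T k))

theorem T_mul_Tinv (k : Fin (n - 1)) : T k * Tinv k = 1 := by
  have hu : (u : K) ≠ 0 := RatFunc.X_ne_zero
  have hc : (u⁻¹ - 1) + (1 - u) * -u⁻¹ = 0 := by
    field_simp
    ring
  rw [Tinv, mul_add, mul_smul_comm, T_mul_E_mul_one_sub_T, T_mul_self, smul_smul, add_assoc,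
    ← add_smul, hc, zero_smul, add_zero]

theorem commute_T_Tinv (k : Fin (n - 1)) : Commute (T k) (Tinv k) :=
  ((Commute.refl _).add_right
    ((((commute_E_T k).symm).mul_right ((Commute.one_right _).sub_right (Commute.refl _))).smul_right _))

theorem isUnit_T (k : Fin (n - 1)) : IsUnit (T k) :=
  ⟨⟨T k, Tinv k, T_mul_Tinv k, (commute_T_Tinv k).symm.eq.trans (T_mul_Tinv k)⟩, rfl⟩

theorem commute_E_T_mul_self {i j : Fin (n - 1)} (hij : Nat.dist i j = 1) :
    Commute (E i) (T j * T j) := by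
  have hEET : Commute (E i) (E j * T j) := by
    rw [Commute, SemiconjBy, ← mul_assoc, E_mul_E_mul_T hij, (commute_E_E i j).eq, mul_assoc,
      ← mul_assoc (T j), ← (commute_E_T j).eq, mul_assoc]
  rw [T_mul_self, mul_sub, mul_one]
  exact (Commute.one_right _).add_right (((commute_E_E i j).sub_right hEET).smul_right _)

end En

open En

theorem stmt11_general (n : ℕ) (i j : Fin (n - 1)) (hij : Nat.dist i j = 1) :
    T i * T j * E j * T i = T j * T i * E i * T j := by
  refine (isUnit_T j).mul_left_inj.mp ?_
  calc T i * T j * E j * T i * T j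
      = T i * T j * (E j * T i * T j) := by simp only [mul_assoc]
    _ = T i * T j * T i * T j * E i := by rw [E_mul_T_mul_T hij]; simp only [mul_assoc]
    _ = T j * T i * (T j * T j) * E i := by rw [T_braid hij]; simp only [mul_assoc]
    _ = T j * T i * E i * T j * T j := by
        rw [mul_assoc _ (T j * T j), ← (commute_E_T_mul_self hij).eq]; simp only [mul_assoc]

/-- For `|i - j| = 1`: `T_i T_j E_j T_i = T_j T_i E_i T_j`. -/
theorem stmt11 (n : ℕ) (hn : 2 ≤ n) (i j : Fin (n - 1)) (hij : Nat.dist i j = 1) :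
    T i * T j * E j * T i = T j * T i * E i * T j :=
  stmt11_general n i j hij
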